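/- arXiv:2605.16240 — 5 statements merged into one kernel-verified Lean document; each statement's English description precedes it below -/
import Mathlib

section
/- Let $n$ be a positive odd integer, and let $a$ be an integer relatively prime to $n$. For $j = 1, \ldots, n$, let $\lambda_a(j)$ be the least positive residue of $aj$ modulo $n$ (so $\lambda_a(j) \in \{1,\ldots,n\}$ and $\lambda_a(j) \equiv aj \pmod n$). Then $\lambda_a$ is a permutation of $\{1,\ldots,n\}$ whose sign equals the Jacobi symbol $\left(\frac{a}{n}\right)$. -/
open Equiv Equiv.Perm Subgroup

section L0
variable {G : Type*} [CommGroup G] [Fintype G] [DecidableEq G]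

lemma sign_mulLeft_zpowers (a : G) :
    sign (Equiv.mulLeft (⟨a, mem_zpowers a⟩ : zpowers a)) = (-1 : ℤˣ) ^ (orderOf a - 1) := by
  classical
  obtain ⟨m, hm⟩ : ∃ m, orderOf a = m + 1 := ⟨orderOf a - 1, by have := orderOf_pos a; omega⟩
  have hfin : IsOfFinOrder a := isOfFinOrder_of_finite a
  set e3 : Fin (m+1) ≃ (zpowers a : Subgroup G) :=
    (finCongr hm.symm).trans (finEquivZPowers hfin) with he3
  have hv : ∀ j : Fin (m+1), ((e3 j : G)) = a ^ (j : ℕ) := by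
    intro j
    rfl
  have key : ∀ i : Fin (m+1),
      e3 (finRotate (m+1) i) = Equiv.mulLeft (⟨a, mem_zpowers a⟩ : zpowers a) (e3 i) := by
    intro i
    apply Subtype.ext
    have hr : ((Equiv.mulLeft (⟨a, mem_zpowers a⟩ : zpowers a) (e3 i) : G)) = a * a ^ (i : ℕ) := by
      rw [coe_mulLeft]
      push_cast [hv]
      rfl
    rw [hv, hr, ← pow_succ']
    rw [finRotate_succ_apply, Fin.add_def]
    simp only [Fin.val_one']
    apply (pow_eq_pow_iff_modEq).2
    rw [hm]
    exact (Nat.mod_modEq _ _).trans ((Nat.mod_modEq 1 (m+1)).add_left (i : ℕ))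
  have hs := sign_eq_sign_of_equiv _ _ e3 key
  rw [← hs, sign_finRotate, hm]
end L0

section L0b
variable {G : Type*} [CommGroup G] [Fintype G] [DecidableEq G]

/-- The sign of translation by `a` on a finite commutative group. -/
lemma sign_mulLeft_eq (a : G) :
    sign (Equiv.mulLeft a) =
      ((-1 : ℤˣ) ^ (orderOf a - 1)) ^ (Fintype.card G / orderOf a) := by
  classical
  set H : Subgroup G := zpowers a with hH
  have hmem : ∀ x : G, (Quotient.out (QuotientGroup.mk (s := H) x))⁻¹ * x ∈ H := by
    intro x
    exact (QuotientGroup.eq (s := H)).mp (Quotient.out_eq _)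
  set e : G ≃ (G ⧸ H) × H :=
    { toFun := fun x => (QuotientGroup.mk x, ⟨(Quotient.out (QuotientGroup.mk (s := H) x))⁻¹ * x, hmem x⟩)
      invFun := fun c => Quotient.out c.1 * (c.2 : G)
      left_inv := fun x => mul_inv_cancel_left _ _
      right_inv := fun c => by
        obtain ⟨L, h, hh⟩ := c
        have h1 : QuotientGroup.mk (s := H) (Quotient.out L * h) = L := by
          rw [QuotientGroup.mk_mul_of_mem _ hh]
          exact QuotientGroup.out_eq' L
        refine Prod.ext h1 (Subtype.ext ?_)
        show (Quotient.out (QuotientGroup.mk (s := H) (Quotient.out L * h)))⁻¹ * _ = h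
        rw [h1]
        exact inv_mul_cancel_left _ _ } with he
  have key : ∀ x : G, e (Equiv.mulLeft a x)
      = (prodCongrRight fun _ => Equiv.mulLeft (⟨a, mem_zpowers a⟩ : H)) (e x) := by
    intro x
    have h1 : QuotientGroup.mk (s := H) (a * x) = QuotientGroup.mk (s := H) x := by
      apply (QuotientGroup.eq (s := H)).mpr
      have : (a * x)⁻¹ * x = a⁻¹ := by
        rw [mul_inv_rev, mul_comm x⁻¹ a⁻¹]
        exact inv_mul_cancel_right _ _
      rw [this]; exact inv_mem (mem_zpowers a)
    refine Prod.ext h1 (Subtype.ext ?_)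
    show (Quotient.out (QuotientGroup.mk (s := H) (a * x)))⁻¹ * (a * x)
        = a * ((Quotient.out (QuotientGroup.mk (s := H) x))⁻¹ * x)
    rw [h1]
    exact mul_left_comm _ a x
  have hs := sign_eq_sign_of_equiv _ _ e key
  rw [hs, sign_prodCongrRight, sign_mulLeft_zpowers, Finset.prod_const, Finset.card_univ]
  congr 1
  have hcard : Nat.card G = Nat.card (G ⧸ H) * Nat.card H :=
    card_eq_card_quotient_mul_card_subgroup H
  have hH' : Nat.card H = orderOf a := Nat.card_zpowers a
  have hpos := orderOf_pos a
  simp only [Nat.card_eq_fintype_card] at hcard hH'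
  rw [hcard, hH', Nat.mul_div_cancel _ hpos]
end L0b

section helpers

lemma sign_mulLeft_pow {G : Type*} [Group G] [Fintype G] [DecidableEq G] (g : G) (m : ℕ) :
    sign (Equiv.mulLeft (g ^ m)) = (sign (Equiv.mulLeft g)) ^ m := by
  induction m with
  | zero => simp [Equiv.Perm.one_def]
  | succ k ih =>
      have h : Equiv.mulLeft (g ^ (k+1)) = Equiv.mulLeft (g ^ k) * Equiv.mulLeft g := by
        ext x
        simp [pow_succ, mul_assoc, Equiv.Perm.mul_apply]
      rw [h, map_mul, ih, pow_succ]

lemma sign_mulLeft_comap {G H : Type*} [Group G] [Group H] [Fintype G] [Fintype H]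
    [DecidableEq G] [DecidableEq H] (e : G ≃* H) (g : G) :
    sign (Equiv.mulLeft (e g)) = sign (Equiv.mulLeft g) :=
  (sign_eq_sign_of_equiv _ _ e.toEquiv (by intro x; simp)).symm

end helpers

section prime

lemma sign_mulLeft_units_prime (p : ℕ) [hp : Fact p.Prime] (hp2 : p ≠ 2)
    (u : (ZMod p)ˣ) (a : ℤ) (ha : (a : ZMod p) = ↑u) :
    ((sign (Equiv.mulLeft u : Perm (ZMod p)ˣ) : ℤˣ) : ℤ) = jacobiSym a p := by
  classical
  rw [← jacobiSym.legendreSym.to_jacobiSym]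
  obtain ⟨g, hg⟩ := IsCyclic.exists_generator (α := (ZMod p)ˣ)
  have hordg : orderOf g = p - 1 := by
    rw [orderOf_eq_card_of_forall_mem_zpowers hg, Nat.card_eq_fintype_card, ZMod.card_units]
  have hp3 : 3 ≤ p := by
    have := hp.out.two_le
    rcases Nat.lt_or_ge p 3 with h | h
    · interval_cases p <;> simp_all
    · exact h
  obtain ⟨c, hc⟩ : Odd p := hp.out.odd_of_ne_two hp2
  -- sign of mulLeft g is -1
  have hsg : sign (Equiv.mulLeft g : Perm (ZMod p)ˣ) = -1 := by
    rw [sign_mulLeft_eq, hordg, ZMod.card_units, Nat.div_self (by omega : 0 < p - 1), pow_one,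
      Odd.neg_one_pow ⟨c - 1, by omega⟩]
  -- g is not a square
  have hns : ¬ IsSquare ((g : ZMod p)) := by
    rintro ⟨b, hb⟩
    have hb0 : b ≠ 0 := by
      rintro rfl
      rw [mul_zero] at hb
      exact Units.ne_zero g hb
    obtain ⟨z, hz⟩ := hg (Units.mk0 b hb0)
    have hz' : g ^ z = Units.mk0 b hb0 := hz
    have hgu : g = Units.mk0 b hb0 * Units.mk0 b hb0 := by
      ext; simpa using hb
    have h1 : g ^ (2 * z - 1) = 1 := by
      have : g ^ (2 * z) = g := by
        rw [two_mul, zpow_add, hz', ← hgu]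
      rw [zpow_sub, this, zpow_one, mul_inv_cancel]
    have h2 : ((p - 1 : ℕ) : ℤ) ∣ 2 * z - 1 := by
      rw [← hordg]
      exact orderOf_dvd_iff_zpow_eq_one.mpr h1
    have h3 : (2 : ℤ) ∣ ((p - 1 : ℕ) : ℤ) := by
      have : Even (p - 1) := by
        rcases hp.out.eq_two_or_odd' with h | ⟨c, hc⟩
        · exact absurd h hp2
        · exact ⟨c, by omega⟩
      obtain ⟨c, hc⟩ := this
      exact ⟨(c : ℤ), by exact_mod_cast by omega⟩
    obtain ⟨c, hc⟩ := h3.trans h2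
    omega
  have hqg : quadraticChar (ZMod p) (g : ZMod p) = -1 :=
    quadraticChar_neg_one_iff_not_isSquare.mpr hns
  -- write u as a power of g
  obtain ⟨m, hm⟩ := mem_powers_iff_mem_zpowers.mpr (hg u)
  have hleg : legendreSym p a = (-1) ^ m := by
    rw [legendreSym, ha, ← hm]
    push_cast
    rw [map_pow, hqg]
  rw [hleg, ← hm, sign_mulLeft_pow, hsg]
  push_cast
  ring
end prime

section parity

lemma neg_one_pow_parity (x y : ℕ) (h : Even x ↔ Even y) : (-1 : ℤˣ) ^ x = (-1) ^ y := by
  rcases Nat.even_or_odd x with hx | hx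
  · rw [hx.neg_one_pow, (h.1 hx).neg_one_pow]
  · have hy : Odd y := by
      rw [← Nat.not_even_iff_odd] at hx ⊢
      exact fun hey => hx (h.2 hey)
    rw [hx.neg_one_pow, hy.neg_one_pow]

end parity

section unitsPrimePow

lemma parity_core (p d d' N N' : ℕ) (hp : p.Prime) (hpodd : Odd p)
    (hd'd : d' ∣ d) (hdpos : 0 < d) (hd'pos : 0 < d') (hdvd : d ∣ d' * p)
    (hdN : d ∣ N) (hd'N' : d' ∣ N') (hNpN' : N = p * N') :
    ((-1 : ℤˣ) ^ (d - 1)) ^ (N / d) = ((-1 : ℤˣ) ^ (d' - 1)) ^ (N' / d') := by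
  rw [← pow_mul, ← pow_mul]
  set t := d / d' with htdef
  have htd : d = d' * t := by rw [htdef, Nat.mul_div_cancel' hd'd]
  have htp : t ∣ p := by
    have h : d' * t ∣ d' * p := htd ▸ hdvd
    exact (Nat.mul_dvd_mul_iff_left hd'pos).mp h
  have htodd : Odd t := by
    rcases (Nat.Prime.eq_one_or_self_of_dvd hp t htp) with h | h
    · rw [h]; exact odd_one
    · rw [h]; exact hpodd
  have hq : (N / d) * t = p * (N' / d') := by
    have h1 : ((N / d) * t) * d' = (p * (N' / d')) * d' := by
      calc ((N / d) * t) * d' = (N / d) * (d' * t) := by ring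
        _ = (N / d) * d := by rw [← htd]
        _ = N := Nat.div_mul_cancel hdN
        _ = p * N' := hNpN'
        _ = p * ((N' / d') * d') := by rw [Nat.div_mul_cancel hd'N']
        _ = (p * (N' / d')) * d' := by ring
    exact Nat.eq_of_mul_eq_mul_right hd'pos h1
  apply neg_one_pow_parity
  rcases Nat.even_or_odd d' with hd'e | hd'o
  · have hde : Even d := htd ▸ hd'e.mul_right t
    have h1 : Even ((d - 1) * (N / d)) ↔ Even (N / d) := by
      rw [Nat.even_mul]
      have : ¬ Even (d - 1) := by
        rw [Nat.even_sub hdpos]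
        simp [hde]
      tauto
    have h2 : Even ((d' - 1) * (N' / d')) ↔ Even (N' / d') := by
      rw [Nat.even_mul]
      have : ¬ Even (d' - 1) := by
        rw [Nat.even_sub hd'pos]
        simp [hd'e]
      tauto
    rw [h1, h2]
    have h3 : Even (N / d) ↔ Even ((N / d) * t) := by
      rw [Nat.even_mul]
      simp [Nat.not_even_iff_odd.mpr htodd]
    have h4 : Even (N' / d') ↔ Even (p * (N' / d')) := by
      rw [Nat.even_mul]
      simp [Nat.not_even_iff_odd.mpr hpodd]
    rw [h3, h4, hq]
  · have hdo : Odd d := htd ▸ hd'o.mul htodd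
    constructor <;> intro _
    · exact ((Nat.Odd.sub_odd hd'o odd_one).mul_right _)
    · exact ((Nat.Odd.sub_odd hdo odd_one).mul_right _)

lemma units_sign_step (p : ℕ) [hp : Fact p.Prime] (hp2 : p ≠ 2) (k : ℕ)
    (u : (ZMod (p ^ (k+2)))ˣ) :
    sign (Equiv.mulLeft u : Perm (ZMod (p ^ (k+2)))ˣ)
      = sign (Equiv.mulLeft (ZMod.unitsMap (pow_dvd_pow p (Nat.le_succ (k+1))) u) :
          Perm (ZMod (p ^ (k+1)))ˣ) := by
  classical
  haveI : NeZero (p ^ (k+2)) := ⟨pow_ne_zero _ hp.out.pos.ne'⟩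
  haveI : NeZero (p ^ (k+1)) := ⟨pow_ne_zero _ hp.out.pos.ne'⟩
  set φ := ZMod.unitsMap (pow_dvd_pow p (Nat.le_succ (k+1))) with hφ
  have hpodd : Odd p := hp.out.odd_of_ne_two hp2
  have hN : Fintype.card (ZMod (p ^ (k+2)))ˣ = p ^ (k+1) * (p - 1) := by
    rw [ZMod.card_units_eq_totient, Nat.totient_prime_pow hp.out (Nat.succ_pos _)]
    congr 1
  have hN' : Fintype.card (ZMod (p ^ (k+1)))ˣ = p ^ k * (p - 1) := by
    rw [ZMod.card_units_eq_totient, Nat.totient_prime_pow hp.out (Nat.succ_pos _)]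
    congr 1
  have hNpN' : Fintype.card (ZMod (p ^ (k+2)))ˣ = p * Fintype.card (ZMod (p ^ (k+1)))ˣ := by
    rw [hN, hN', pow_succ]; ring
  have hN'pos : 0 < Fintype.card (ZMod (p ^ (k+1)))ˣ := Fintype.card_pos
  have hker : Nat.card (φ.ker) = p := by
    have hsurj : Function.Surjective φ := ZMod.unitsMap_surjective _
    have h1 : Nat.card (ZMod (p ^ (k+2)))ˣ
        = Nat.card ((ZMod (p ^ (k+2)))ˣ ⧸ φ.ker) * Nat.card φ.ker :=
      Subgroup.card_eq_card_quotient_mul_card_subgroup _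
    have h2 : Nat.card ((ZMod (p ^ (k+2)))ˣ ⧸ φ.ker) = Nat.card (ZMod (p ^ (k+1)))ˣ :=
      Nat.card_congr (QuotientGroup.quotientKerEquivOfSurjective φ hsurj).toEquiv
    rw [h2] at h1
    simp only [Nat.card_eq_fintype_card] at h1 ⊢
    rw [hNpN', mul_comm p _] at h1
    exact (Nat.eq_of_mul_eq_mul_left hN'pos h1).symm
  have hdvd : orderOf u ∣ orderOf (φ u) * p := by
    have hmem : u ^ orderOf (φ u) ∈ φ.ker := by
      rw [MonoidHom.mem_ker, map_pow, pow_orderOf_eq_one]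
    have h : orderOf (u ^ orderOf (φ u)) ∣ p := by
      have h0 := Subgroup.orderOf_dvd_natCard _ hmem
      rwa [hker] at h0
    have h1 : u ^ (orderOf (φ u) * p) = 1 := by
      rw [pow_mul]
      exact orderOf_dvd_iff_pow_eq_one.mp h
    exact orderOf_dvd_iff_pow_eq_one.mpr h1
  rw [sign_mulLeft_eq, sign_mulLeft_eq]
  exact parity_core p (orderOf u) (orderOf (φ u)) _ _ hp.out hpodd
    (orderOf_map_dvd φ u) (orderOf_pos u) (orderOf_pos (φ u)) hdvd
    orderOf_dvd_card orderOf_dvd_card hNpN'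

end unitsPrimePow

lemma units_sign_primepow (p : ℕ) [hp : Fact p.Prime] (hp2 : p ≠ 2) :
    ∀ k : ℕ, ∀ u : (ZMod (p ^ (k+1)))ˣ, ∀ a : ℤ, ((a : ZMod (p ^ (k+1))) = ↑u) →
    ((sign (Equiv.mulLeft u : Perm (ZMod (p ^ (k+1)))ˣ) : ℤˣ) : ℤ) = jacobiSym a p := by
  intro k
  induction k with
  | zero =>
      intro u a ha
      classical
      set E := ZMod.ringEquivCongr (pow_one p) with hE
      set φe := Units.mapEquiv E.toMulEquiv with hφe
      rw [← sign_mulLeft_comap φe u]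
      apply sign_mulLeft_units_prime p hp2 (φe u) a
      have h1 : ((φe u : (ZMod p)ˣ) : ZMod p) = E ((u : ZMod (p ^ 1))) := rfl
      rw [h1, ← ha, map_intCast]
  | succ k ih =>
      intro u a ha
      classical
      rw [units_sign_step p hp2 k u]
      apply ih _ a
      have h1 : ((ZMod.unitsMap (pow_dvd_pow p (Nat.le_succ (k+1))) u : (ZMod (p^(k+1)))ˣ) : ZMod (p^(k+1)))
          = ZMod.castHom (pow_dvd_pow p (Nat.le_succ (k+1))) (ZMod (p^(k+1))) ((u : ZMod (p ^ (k+2)))) := rfl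
      rw [h1, ← ha, map_intCast]

section mulUnitPerm

/-- Multiplication by a unit, as a permutation of a monoid. -/
def mulUnitPerm {M : Type*} [Monoid M] (u : Mˣ) : Equiv.Perm M where
  toFun x := u * x
  invFun x := ↑u⁻¹ * x
  left_inv x := by simp [← mul_assoc]
  right_inv x := by simp [← mul_assoc]

@[simp] lemma mulUnitPerm_apply {M : Type*} [Monoid M] (u : Mˣ) (x : M) :
    mulUnitPerm u x = ↑u * x := rfl

end mulUnitPerm

section strata

lemma strata (p : ℕ) [hp : Fact p.Prime] (k : ℕ) (a : ℤ)
    (u : (ZMod (p ^ (k+1)))ˣ) (u' : (ZMod (p ^ k))ˣ)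
    (hu : (a : ZMod (p ^ (k+1))) = ↑u) (hu' : (a : ZMod (p ^ k)) = ↑u') :
    sign (mulUnitPerm u)
      = sign (mulUnitPerm u') * sign (Equiv.mulLeft u : Perm (ZMod (p ^ (k+1)))ˣ) := by
  classical
  haveI : NeZero (p ^ (k+1)) := ⟨pow_ne_zero _ hp.out.pos.ne'⟩
  haveI : NeZero (p ^ k) := ⟨pow_ne_zero _ hp.out.pos.ne'⟩
  have hlt : ∀ x : ZMod (p ^ k), p * x.val < p ^ (k+1) := by
    intro x
    rw [pow_succ']
    exact (Nat.mul_lt_mul_left hp.out.pos).mpr (ZMod.val_lt x)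
  have hval : ∀ x : ZMod (p ^ k),
      (((p * x.val : ℕ) : ZMod (p ^ (k+1)))).val = p * x.val := fun x =>
    ZMod.val_cast_of_lt (hlt x)
  have hnonunit : ∀ x : ZMod (p ^ k), ¬ IsUnit (((p * x.val : ℕ) : ZMod (p ^ (k+1)))) := by
    intro x h
    rw [ZMod.isUnit_iff_coprime] at h
    have h1 : Nat.Coprime p (p ^ (k+1)) :=
      Nat.Coprime.coprime_dvd_left (dvd_mul_right p x.val) h
    have h2 : Nat.Coprime p p :=
      Nat.Coprime.coprime_dvd_right (dvd_pow_self p (Nat.succ_ne_zero k)) h1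
    rw [Nat.Coprime, Nat.gcd_self] at h2
    exact hp.out.one_lt.ne' h2
  set f : ZMod (p ^ k) ⊕ (ZMod (p ^ (k+1)))ˣ → ZMod (p ^ (k+1)) :=
    Sum.elim (fun x => ((p * x.val : ℕ) : ZMod (p ^ (k+1)))) (fun v => ↑v) with hf
  have hbij : Function.Bijective f := by
    constructor
    · rintro (x | v) (y | w) h <;> simp only [hf, Sum.elim_inl, Sum.elim_inr] at h
      · have := congrArg ZMod.val h
        rw [hval, hval] at this
        have hxy : x.val = y.val := Nat.eq_of_mul_eq_mul_left hp.out.pos this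
        exact congrArg Sum.inl (ZMod.val_injective _ hxy)
      · exact absurd (h ▸ Units.isUnit w) (hnonunit x)
      · exact absurd (h ▸ Units.isUnit v) (hnonunit y)
      · exact congrArg Sum.inr (Units.ext h)
    · intro y
      by_cases hy : IsUnit y
      · exact ⟨Sum.inr hy.unit, hy.unit_spec⟩
      · have hy' : ¬ Nat.Coprime y.val (p ^ (k+1)) := by
          intro hco
          apply hy
          have := (ZMod.isUnit_iff_coprime y.val (p ^ (k+1))).mpr hco
          rwa [ZMod.natCast_rightInverse y] at this
        have hdvd : p ∣ y.val := by
          by_contra hnd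
          exact hy' ((Nat.coprime_pow_right_iff (Nat.succ_pos k) _ _).mpr
            ((Nat.Prime.coprime_iff_not_dvd hp.out).mpr hnd).symm)
        obtain ⟨c, hc⟩ := hdvd
        have hclt : c < p ^ k := by
          have := ZMod.val_lt y
          rw [hc, pow_succ'] at this
          exact Nat.lt_of_mul_lt_mul_left this
        refine ⟨Sum.inl (c : ZMod (p ^ k)), ?_⟩
        simp only [hf, Sum.elim_inl]
        rw [ZMod.val_cast_of_lt hclt, ← hc]
        exact ZMod.natCast_rightInverse y
  set E := Equiv.ofBijective f hbij with hE
  have key : ∀ s, E ((Equiv.sumCongr (mulUnitPerm u') (Equiv.mulLeft u)) s)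
      = mulUnitPerm u (E s) := by
    rintro (x | v)
    · show ((p * ((↑u' * x : ZMod (p ^ k)).val) : ℕ) : ZMod (p ^ (k+1)))
        = ↑u * ((p * x.val : ℕ) : ZMod (p ^ (k+1)))
      rw [← hu, ← hu']
      set y : ZMod (p ^ k) := (a : ZMod (p ^ k)) * x with hy
      have h1 : ((a * (x.val : ℤ) : ℤ) : ZMod (p ^ k)) = ((y.val : ℤ) : ZMod (p ^ k)) := by
        push_cast
        rw [ZMod.natCast_rightInverse x, ZMod.natCast_rightInverse y]
      have h2 : ((p ^ k : ℕ) : ℤ) ∣ (y.val : ℤ) - a * (x.val : ℤ) := by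
        have := (ZMod.intCast_eq_intCast_iff _ _ _).mp h1
        exact Int.ModEq.dvd this
      have h3 : ((p ^ (k+1) : ℕ) : ℤ) ∣ (p : ℤ) * ((y.val : ℤ) - a * (x.val : ℤ)) := by
        push_cast [pow_succ']
        push_cast at h2
        exact mul_dvd_mul_left _ h2
      have h4 : ((((p : ℤ) * (y.val : ℤ) : ℤ)) : ZMod (p ^ (k+1)))
          = ((a * ((p : ℤ) * (x.val : ℤ)) : ℤ) : ZMod (p ^ (k+1))) := by
        rw [ZMod.intCast_eq_intCast_iff]
        have h5 : ((p ^ (k+1) : ℕ) : ℤ) ∣ (a * ((p:ℤ) * (x.val:ℤ)) - (p:ℤ) * (y.val:ℤ)) := by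
          have h6 : (a * ((p:ℤ) * (x.val:ℤ)) - (p:ℤ) * (y.val:ℤ))
              = -((p:ℤ) * ((y.val:ℤ) - a * (x.val:ℤ))) + (p:ℤ) * ((a - a) * 0) := by ring
          rw [h6]
          simpa using (dvd_neg.mpr h3)
        exact Int.modEq_iff_dvd.mpr h5
      push_cast at h4 ⊢
      linear_combination h4
    · show ((u * v : (ZMod (p ^ (k+1)))ˣ) : ZMod (p ^ (k+1))) = ↑u * (E (Sum.inr v))
      rfl
  have hs := sign_eq_sign_of_equiv _ _ E key
  rw [← hs, Equiv.Perm.sign_sumCongr]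

end strata

lemma units_pow_odd (s : ℤˣ) {m : ℕ} (hm : Odd m) : s ^ m = s := by
  rcases Int.units_eq_one_or s with rfl | rfl
  · simp
  · exact Odd.neg_one_pow hm

lemma key_primepow (p : ℕ) [hp : Fact p.Prime] (hp2 : p ≠ 2) :
    ∀ k : ℕ, ∀ (a : ℤ) (h : IsUnit ((a : ZMod (p ^ k)))),
    ((sign (mulUnitPerm h.unit : Perm (ZMod (p ^ k))) : ℤˣ) : ℤ) = jacobiSym a (p ^ k) := by
  intro k
  induction k with
  | zero =>
      intro a h
      haveI : Subsingleton (ZMod (p ^ 0)) := by rw [pow_zero]; infer_instance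
      have h1 : (mulUnitPerm h.unit : Perm (ZMod (p ^ 0))) = Equiv.refl _ :=
        Equiv.ext fun x => Subsingleton.elim _ _
      rw [h1]
      have h2 : jacobiSym a (p ^ 0) = 1 := by rw [pow_zero]; exact jacobiSym.one_right a
      rw [h2, sign_refl]
      rfl
  | succ k ih =>
      intro a h
      have h' : IsUnit ((a : ZMod (p ^ k))) := by
        have := h.map (ZMod.castHom (pow_dvd_pow p (Nat.le_succ k)) (ZMod (p ^ k)))
        rwa [map_intCast] at this
      have hstrata := strata p k a h.unit h'.unit h.unit_spec.symm h'.unit_spec.symm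
      have hunits := units_sign_primepow p hp2 k h.unit a h.unit_spec.symm
      have hjac : jacobiSym a (p ^ (k+1)) = jacobiSym a (p ^ k) * jacobiSym a p := by
        rw [pow_succ]
        exact jacobiSym.mul_right' a (pow_ne_zero k hp.out.pos.ne') hp.out.pos.ne'
      rw [hstrata, hjac, ← ih a h', ← hunits]
      push_cast
      ring

lemma key_lemma : ∀ n : ℕ, ∀ (_ : NeZero n), Odd n → ∀ (a : ℤ) (h : IsUnit ((a : ZMod n))),
    ((@sign (ZMod n) (ZMod.decidableEq n) (ZMod.fintype n) (mulUnitPerm h.unit) : ℤˣ) : ℤ)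
      = jacobiSym a n := by
  intro n
  induction n using Nat.recOnPosPrimePosCoprime with
  | zero =>
      intro inst
      exact absurd rfl inst.out
  | one =>
      intro _ _ a h
      have h1 : (mulUnitPerm h.unit : Perm (ZMod 1)) = Equiv.refl _ :=
        Equiv.ext fun x => Subsingleton.elim _ _
      rw [h1, sign_refl, jacobiSym.one_right]
      rfl
  | prime_pow p k hpp hk =>
      intro inst hodd a h
      haveI : Fact p.Prime := ⟨hpp⟩
      have hp2 : p ≠ 2 := by
        rintro rfl
        have he : Even (2 ^ k) := Nat.even_pow.mpr ⟨even_two, hk.ne'⟩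
        exact (Nat.not_odd_iff_even.mpr he) hodd
      have := key_primepow p hp2 k a h
      convert this using 3
  | coprime b c hb hc hbc ihb ihc =>
      intro inst hodd a h
      haveI : NeZero b := ⟨by omega⟩
      haveI : NeZero c := ⟨by omega⟩
      obtain ⟨hoddb, hoddc⟩ := (Nat.odd_mul).mp hodd
      have hb' : IsUnit ((a : ZMod b)) := by
        have := h.map (ZMod.castHom (dvd_mul_right b c) (ZMod b))
        rwa [map_intCast] at this
      have hc' : IsUnit ((a : ZMod c)) := by
        have := h.map (ZMod.castHom (dvd_mul_left c b) (ZMod c))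
        rwa [map_intCast] at this
      classical
      set E := (ZMod.chineseRemainder hbc).toEquiv with hE
      set π : Perm (ZMod b × ZMod c) :=
        (prodCongrRight fun _ : ZMod b => mulUnitPerm hc'.unit).trans
          (prodCongrLeft fun _ : ZMod c => mulUnitPerm hb'.unit) with hπ
      have hkey : ∀ x, E ((mulUnitPerm h.unit : Perm (ZMod (b * c))) x) = π (E x) := by
        intro x
        have hmul : E ((mulUnitPerm h.unit : Perm (ZMod (b * c))) x)
            = E ((a : ZMod (b * c))) * E x := by
          rw [mulUnitPerm_apply, h.unit_spec]
          exact map_mul (ZMod.chineseRemainder hbc) _ _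
        have hcast : E ((a : ZMod (b * c))) = ((a : ZMod b), (a : ZMod c)) := by
          show (ZMod.chineseRemainder hbc) ((a : ZMod (b * c))) = _
          rw [map_intCast]
          rfl
        rw [hmul, hcast]
        generalize E x = y
        obtain ⟨y1, y2⟩ := y
        simp only [hπ, trans_apply, prodCongrRight_apply, prodCongrLeft_apply,
          mulUnitPerm_apply, hb'.unit_spec, hc'.unit_spec, Prod.mk_mul_mk]
      have hs := sign_eq_sign_of_equiv _ _ E hkey
      have hπs : sign π = sign (mulUnitPerm hb'.unit : Perm (ZMod b))
          * sign (mulUnitPerm hc'.unit : Perm (ZMod c)) := by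
        have hmuldef : π = (prodCongrLeft fun _ : ZMod c => mulUnitPerm hb'.unit)
            * (prodCongrRight fun _ : ZMod b => mulUnitPerm hc'.unit) := rfl
        rw [hmuldef, map_mul, sign_prodCongrLeft, sign_prodCongrRight,
          Finset.prod_const, Finset.prod_const, Finset.card_univ, Finset.card_univ,
          ZMod.card, ZMod.card, units_pow_odd _ hoddc, units_pow_odd _ hoddb, mul_comm]
      have hjac : jacobiSym a (b * c) = jacobiSym a b * jacobiSym a c :=
        jacobiSym.mul_right a b c
      rw [hjac, ← ihb ‹NeZero b› hoddb a hb', ← ihc ‹NeZero c› hoddc a hc']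
      have : ((@sign (ZMod (b*c)) (ZMod.decidableEq _) (ZMod.fintype _) (mulUnitPerm h.unit) : ℤˣ) : ℤ)
          = ((sign π : ℤˣ) : ℤ) := by rw [← hs]
      rw [this, hπs]
      push_cast
      ring

theorem zolotarev_frobenius (n : ℕ) (hn : 0 < n) (hodd : Odd n)
    (a : ℤ) (ha : Int.gcd a n = 1) :
    ∃ σ : Equiv.Perm (Fin n),
      (∀ j : Fin n, (((σ j : ℕ) : ℤ) + 1) ≡ a * (((j : ℕ) : ℤ) + 1) [ZMOD n]) ∧
      (Equiv.Perm.sign σ : ℤ) = jacobiSym a n := by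
  haveI : NeZero n := ⟨hn.ne'⟩
  have h : IsUnit ((a : ZMod n)) := by
    have hco : IsCoprime a (n : ℤ) := Int.isCoprime_iff_gcd_eq_one.mpr ha
    have := hco.map (Int.castRingHom (ZMod n))
    simp only [map_intCast, map_natCast, ZMod.natCast_self] at this
    exact isCoprime_zero_right.mp this
  have hbij : Function.Bijective (fun j : Fin n => ((j : ℕ) : ZMod n) + 1) := by
    rw [Fintype.bijective_iff_injective_and_card]
    constructor
    · intro j₁ j₂ hj
      have h1 : ((j₁ : ℕ) : ZMod n) = ((j₂ : ℕ) : ZMod n) := by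
        exact add_right_cancel hj
      have h2 := congrArg ZMod.val h1
      rw [ZMod.val_cast_of_lt j₁.isLt, ZMod.val_cast_of_lt j₂.isLt] at h2
      exact Fin.ext h2
    · rw [ZMod.card, Fintype.card_fin]
  set e : Fin n ≃ ZMod n := Equiv.ofBijective _ hbij with he
  have he_apply : ∀ j : Fin n, e j = ((j : ℕ) : ZMod n) + 1 := fun _ => rfl
  set σ : Equiv.Perm (Fin n) := (e.trans (mulUnitPerm h.unit)).trans e.symm with hσ
  have hσe : ∀ j : Fin n, e (σ j) = (a : ZMod n) * e j := by
    intro j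
    rw [hσ]
    simp only [trans_apply, Equiv.apply_symm_apply, mulUnitPerm_apply, h.unit_spec]
  refine ⟨σ, fun j => ?_, ?_⟩
  · have h1 : (((σ j : ℕ) : ZMod n)) + 1 = (a : ZMod n) * (((j : ℕ) : ZMod n) + 1) := by
      rw [← he_apply, ← he_apply, hσe]
    have h2 : (((((σ j : ℕ) : ℤ)) + 1 : ℤ) : ZMod n) = ((a * (((j : ℕ) : ℤ) + 1) : ℤ) : ZMod n) := by
      push_cast
      exact h1
    exact (ZMod.intCast_eq_intCast_iff _ _ _).mp h2
  · have hs := sign_eq_sign_of_equiv σ (mulUnitPerm h.unit) e hσe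
    rw [hs]
    exact key_lemma n ‹NeZero n› hodd a h
end

section
/- Let $n$ be a positive odd integer, let $a$ be an integer with $\gcd(a(a+1), n) = 1$, and let $q$ be a positive real number with $q \neq 1$. Let $Q$ be the $n \times n$ real matrix whose $(j,k)$-entry (for $1 \le j,k \le n$) is $q^{-\{(aj-(a+1)k)/n\}}$, where $\{x\}$ is the fractional part and the power is a real power of $q$. Then $Q$ is invertible, and its inverse is $\frac{1}{1-q^{-1}}[f(j,k)]_{1 \le j,k \le n}$, where $f(j,k) = [\![\, n \mid (a+1)j - ak \,]\!] - q^{-1/n}[\![\, n \mid (a+1)j - ak - 1 \,]\!]$ and $[\![ S ]\!]$ equals $1$ if statement $S$ holds and $0$ otherwise. -/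
/-!
Since `a + 1` is a unit mod `n`, the `l`-th column of the proposed inverse has exactly two
nonzero entries, in the rows `k` with `(a + 1) k ≡ a l` and `(a + 1) k ≡ a l + 1 (mod n)`.
The entries of `Q` depend only on `a j - (a + 1) k` mod `n`, so the `(j, l)` entry of the
product is `(q^{-{x/n}} - q^{-1/n} q^{-{(x-1)/n}}) / (1 - q⁻¹)` with `x = a (j - l)`. The two
fractional parts differ by exactly `1/n` unless `n ∣ x`, when they are `0` and `(n-1)/n`; hence
the entry is `[n ∣ a (j - l)] = [j = l]`. A one-sided inverse of a square matrix is two-sided.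
-/

open Finset Function

namespace Int

theorem sub_one_emod_of_dvd {n x : ℤ} (hn : 0 < n) (hx : n ∣ x) : (x - 1) % n = n - 1 := by
  obtain ⟨m, rfl⟩ := hx
  rw [show n * m - 1 = n - 1 + n * (m - 1) by ring, add_mul_emod_self_left]
  exact emod_eq_of_lt (by omega) (by omega)

theorem sub_one_emod_of_not_dvd {n x : ℤ} (hn : 0 < n) (hx : ¬ n ∣ x) :
    (x - 1) % n = x % n - 1 := by
  have hpos : x % n ≠ 0 := fun h => hx (dvd_of_emod_eq_zero h)
  have := emod_nonneg x hn.ne'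
  have := emod_lt_of_pos x hn
  rw [((mod_modEq x n).symm.sub_right 1).eq]
  exact emod_eq_of_lt (by omega) (by omega)

end Int

theorem Fin.eq_of_intCast_dvd_mul_sub {n : ℕ} {c : ℤ} (hc : IsCoprime c n) {j l : Fin n}
    (h : (n : ℤ) ∣ c * ((j : ℕ) - (l : ℕ))) : j = l := by
  have hmod : (l : ℕ) ≡ j [MOD n] := Nat.modEq_iff_dvd.mpr (hc.symm.dvd_of_dvd_mul_left h)
  exact Fin.ext (hmod.eq_of_lt_of_lt l.isLt j.isLt).symm

theorem existsUnique_fin_dvd_mul_add_sub {n : ℕ} (hn : 0 < n) {c : ℤ} (hc : IsCoprime c n)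
    (s t : ℤ) : ∃! k : Fin n, (n : ℤ) ∣ c * ((k : ℕ) + s) - t := by
  obtain ⟨u, v, huv⟩ := id hc
  have hnZ : (0 : ℤ) < n := by exact_mod_cast hn
  set r := (u * t - s) % n
  have hr : (r.toNat : ℤ) = r := Int.toNat_of_nonneg (Int.emod_nonneg _ hnZ.ne')
  let k₀ : Fin n := ⟨r.toNat, by have := Int.emod_lt_of_pos (u * t - s) hnZ; omega⟩
  -- `k₀ + s ≡ u t` and `c u ≡ 1`
  have hk₀ : (n : ℤ) ∣ c * ((k₀ : ℕ) + s) - t := by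
    refine ⟨-v * t - c * ((u * t - s) / n), ?_⟩
    rw [hr, show r = _ from Int.emod_def _ _]
    linear_combination t * huv
  exact ⟨k₀, hk₀, fun k hk =>
    Fin.eq_of_intCast_dvd_mul_sub hc ((dvd_sub hk hk₀).trans (dvd_of_eq (by ring)))⟩

theorem sum_fin_mul_ite_dvd_mul_add_sub {R : Type*} [NonAssocSemiring R] {n : ℕ} (hn : 0 < n)
    {c : ℤ} (hc : IsCoprime c n) (s t : ℤ) {f : ℤ → R} (hf : Periodic f n) :
    ∑ k : Fin n, f (c * ((k : ℕ) + s)) *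
        (if (n : ℤ) ∣ c * ((k : ℕ) + s) - t then 1 else 0) = f t := by
  obtain ⟨k₀, ⟨m, hm⟩, hk₀⟩ := existsUnique_fin_dvd_mul_add_sub hn hc s t
  rw [sum_eq_single k₀ (fun k _ hk => by rw [if_neg (mt (hk₀ k) hk), mul_zero])
    (fun h => absurd (mem_univ k₀) h), if_pos ⟨m, hm⟩, mul_one, sub_eq_iff_eq_add.mp hm,
    add_comm, mul_comm]
  exact hf.int_mul m t

theorem periodic_fract_intCast_div (n : ℕ) :
    Periodic (fun y : ℤ => Int.fract ((y : ℝ) / n)) n := by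
  intro y
  simp only [Int.fract_div_intCast_eq_div_intCast_mod, Int.add_emod_right]

theorem rpow_neg_fract_sub_rpow_neg_fract_sub_one {q : ℝ} (hq : 0 < q) {n : ℕ} (hn : 0 < n)
    (x : ℤ) :
    q ^ (-Int.fract ((x : ℝ) / n)) -
        q ^ (-(1 / (n : ℝ))) * q ^ (-Int.fract (((x - 1 : ℤ) : ℝ) / n)) =
      if (n : ℤ) ∣ x then 1 - q⁻¹ else 0 := by
  have hnZ : (0 : ℤ) < n := by exact_mod_cast hn
  have hnR : (n : ℝ) ≠ 0 := by positivity
  simp only [Int.fract_div_intCast_eq_div_intCast_mod]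
  rw [← Real.rpow_add hq]
  split_ifs with hx
  · rw [Int.sub_one_emod_of_dvd hnZ hx, Int.emod_eq_zero_of_dvd hx, ← Real.rpow_neg_one q]
    push_cast
    rw [show -(1 / (n : ℝ)) + -(((n : ℝ) - 1) / n) = -1 by field_simp; ring]
    simp
  · rw [Int.sub_one_emod_of_not_dvd hnZ hx, sub_eq_zero]
    congr 1
    push_cast
    ring

theorem inv_q_rpow_neg_fract_general (n : ℕ) (a : ℤ)
    (hcop : Int.gcd (a * (a + 1)) n = 1)
    (q : ℝ) (hq0 : 0 < q) (hq1 : q ≠ 1) :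
    (Matrix.of fun j k : Fin n =>
        q ^ (-Int.fract (((a * ((j : ℕ) + 1) - (a + 1) * ((k : ℕ) + 1) : ℤ) : ℝ) / (n : ℝ)))) *
      (Matrix.of fun j k : Fin n =>
        (1 / (1 - q⁻¹)) *
          ((if (n : ℤ) ∣ (a + 1) * ((j : ℕ) + 1) - a * ((k : ℕ) + 1) then (1 : ℝ) else 0) -
            q ^ (-(1 / (n : ℝ))) *
              (if (n : ℤ) ∣ (a + 1) * ((j : ℕ) + 1) - a * ((k : ℕ) + 1) - 1 then (1 : ℝ) else 0))) = 1 ∧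
    (Matrix.of fun j k : Fin n =>
        (1 / (1 - q⁻¹)) *
          ((if (n : ℤ) ∣ (a + 1) * ((j : ℕ) + 1) - a * ((k : ℕ) + 1) then (1 : ℝ) else 0) -
            q ^ (-(1 / (n : ℝ))) *
              (if (n : ℤ) ∣ (a + 1) * ((j : ℕ) + 1) - a * ((k : ℕ) + 1) - 1 then (1 : ℝ) else 0))) *
      (Matrix.of fun j k : Fin n =>
        q ^ (-Int.fract (((a * ((j : ℕ) + 1) - (a + 1) * ((k : ℕ) + 1) : ℤ) : ℝ) / (n : ℝ)))) = 1 := by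
  refine (fun h => ⟨h, mul_eq_one_comm.mp h⟩) ?_
  have hcop' : IsCoprime (a * (a + 1)) n := Int.isCoprime_iff_gcd_eq_one.mpr hcop
  have hq : 1 - q⁻¹ ≠ 0 := sub_ne_zero.mpr (by simpa [eq_comm] using hq1)
  ext j l
  set g : ℤ → ℝ := fun y => q ^ (-Int.fract (((a * ((j : ℕ) + 1) - y : ℤ) : ℝ) / n))
  have hg : Periodic g n :=
    ((periodic_fract_intCast_div n).comp (fun r => q ^ (-r))).const_sub _
  set ρ : ℝ := q ^ (-(1 / (n : ℝ)))
  calc _ = 1 / (1 - q⁻¹) *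
        (∑ k : Fin n, g ((a + 1) * ((k : ℕ) + 1)) *
            (if (n : ℤ) ∣ (a + 1) * ((k : ℕ) + 1) - a * ((l : ℕ) + 1) then 1 else 0) -
          ρ * ∑ k : Fin n, g ((a + 1) * ((k : ℕ) + 1)) *
            (if (n : ℤ) ∣ (a + 1) * ((k : ℕ) + 1) - (a * ((l : ℕ) + 1) + 1) then 1 else 0)) := by
        simp only [Matrix.mul_apply, Matrix.of_apply, mul_sum, ← sum_sub_distrib, sub_sub]
        exact sum_congr rfl fun k _ => by ring
    _ = 1 / (1 - q⁻¹) * (g (a * ((l : ℕ) + 1)) - ρ * g (a * ((l : ℕ) + 1) + 1)) := by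
        rw [sum_fin_mul_ite_dvd_mul_add_sub j.pos hcop'.of_mul_left_right _ _ hg,
          sum_fin_mul_ite_dvd_mul_add_sub j.pos hcop'.of_mul_left_right _ _ hg]
    _ = 1 / (1 - q⁻¹) *
          (if (n : ℤ) ∣ a * ((j : ℕ) + 1) - a * ((l : ℕ) + 1) then 1 - q⁻¹ else 0) := by
        rw [← rpow_neg_fract_sub_rpow_neg_fract_sub_one hq0 j.pos, sub_sub]
    _ = (1 : Matrix (Fin n) (Fin n) ℝ) j l := by
        rw [← mul_sub, add_sub_add_right_eq_sub, Matrix.one_apply]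
        by_cases hjl : j = l
        · simp [hjl, hq]
        · simp [hjl, mt (Fin.eq_of_intCast_dvd_mul_sub hcop'.of_mul_left_left) hjl]

theorem inv_q_rpow_neg_fract (n : ℕ) (hn : 0 < n) (hodd : Odd n) (a : ℤ)
    (hcop : Int.gcd (a * (a + 1)) n = 1)
    (q : ℝ) (hq0 : 0 < q) (hq1 : q ≠ 1) :
    (Matrix.of fun j k : Fin n =>
        q ^ (-Int.fract (((a * ((j : ℕ) + 1) - (a + 1) * ((k : ℕ) + 1) : ℤ) : ℝ) / (n : ℝ)))) *
      (Matrix.of fun j k : Fin n =>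
        (1 / (1 - q⁻¹)) *
          ((if (n : ℤ) ∣ (a + 1) * ((j : ℕ) + 1) - a * ((k : ℕ) + 1) then (1 : ℝ) else 0) -
            q ^ (-(1 / (n : ℝ))) *
              (if (n : ℤ) ∣ (a + 1) * ((j : ℕ) + 1) - a * ((k : ℕ) + 1) - 1 then (1 : ℝ) else 0))) = 1 ∧
    (Matrix.of fun j k : Fin n =>
        (1 / (1 - q⁻¹)) *
          ((if (n : ℤ) ∣ (a + 1) * ((j : ℕ) + 1) - a * ((k : ℕ) + 1) then (1 : ℝ) else 0) -
            q ^ (-(1 / (n : ℝ))) *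
              (if (n : ℤ) ∣ (a + 1) * ((j : ℕ) + 1) - a * ((k : ℕ) + 1) - 1 then (1 : ℝ) else 0))) *
      (Matrix.of fun j k : Fin n =>
        q ^ (-Int.fract (((a * ((j : ℕ) + 1) - (a + 1) * ((k : ℕ) + 1) : ℤ) : ℝ) / (n : ℝ)))) = 1 :=
  inv_q_rpow_neg_fract_general n a hcop q hq0 hq1
end

section
/- Let $a$ be an integer, let $n$ be a positive odd integer with $\gcd(a(a+1), n) > 1$, and let $q$ be a positive real number with $q \neq 1$. Let $A$ be the $n \times n$ real matrix whose $(j,k)$-entry (for $1 \le j,k \le n$) is $q^{\lfloor (aj-(a+1)k)/n \rfloor}$ (an integer power of $q$). Then the rank of $A$ is at most $n/3$. -/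
theorem aux_rank {n p : ℕ} (hn : 0 < n) (hp : p.Prime) (hpn : p ∣ n)
    (q : ℝ) (hq0 : 0 < q) (h g : Fin n → ℤ) (hg : ∀ k, (p : ℤ) ∣ g k)
    (M : Matrix (Fin n) (Fin n) ℝ)
    (hM : ∀ j k, M j k = q ^ ⌊((h j + g k : ℤ) : ℚ) / (n : ℚ)⌋) :
    M.rank ≤ n / p := by
  have hq0' : q ≠ 0 := ne_of_gt hq0
  have hn0 : ((n : ℤ) : ℚ) ≠ 0 := by exact_mod_cast hn.ne'
  set r : Fin n → ℤ := fun k => g k % n with hr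
  set σ : Finset ℤ := Finset.image r Finset.univ with hσ
  have hmem : ∀ k, r k ∈ σ := fun k => Finset.mem_image_of_mem r (Finset.mem_univ k)
  set B : Matrix (Fin n) σ ℝ := fun j s => q ^ ⌊((h j + s.val : ℤ) : ℚ) / (n : ℚ)⌋ with hB
  set C : Matrix σ (Fin n) ℝ := fun s k => if s = (⟨r k, hmem k⟩ : σ) then q ^ (g k / (n : ℤ)) else 0 with hC
  have hfact : M = B * C := by
    ext j k
    rw [Matrix.mul_apply, hM]
    have step : ∀ s : σ, B j s * C s k = if s = (⟨r k, hmem k⟩ : σ) then B j s * q ^ (g k / (n:ℤ)) else 0 := by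
      intro s; by_cases hs : s = (⟨r k, hmem k⟩ : σ) <;> simp [hC, hs]
    rw [Finset.sum_congr rfl (fun s _ => step s), Finset.sum_ite_eq' Finset.univ]
    simp only [Finset.mem_univ, if_true]
    have e0 : (h j + g k : ℤ) = (h j + r k) + (g k / (n:ℤ)) * n := by
      have := Int.emod_add_mul_ediv (g k) (n : ℤ)
      simp only [hr]; linarith
    have e1 : ((h j + g k : ℤ) : ℚ) / (n : ℚ) =
        ((h j + r k : ℤ) : ℚ) / (n : ℚ) + ((g k / (n:ℤ) : ℤ) : ℚ) := by
      rw [e0]; push_cast; field_simp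
    rw [e1, Int.floor_add_intCast, zpow_add₀ hq0']
  have h1 : M.rank ≤ σ.card := by
    calc M.rank = (B * C).rank := by rw [hfact]
      _ ≤ B.rank := Matrix.rank_mul_le_left B C
      _ ≤ Fintype.card σ := Matrix.rank_le_card_width B
      _ = σ.card := Fintype.card_coe σ
  have hnp : p * (n / p) = n := Nat.mul_div_cancel' hpn
  have h2 : σ.card ≤ n / p := by
    have hsub : σ ⊆ Finset.image (fun i : ℕ => ((p * i : ℕ) : ℤ)) (Finset.range (n / p)) := by
      intro m hm
      simp only [hσ, Finset.mem_image, Finset.mem_univ, true_and] at hm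
      obtain ⟨k, hk⟩ := hm
      have hm0 : 0 ≤ m := hk ▸ Int.emod_nonneg _ (by exact_mod_cast hn.ne')
      have hmn : m < n := hk ▸ Int.emod_lt_of_pos _ (by exact_mod_cast hn)
      have hpm : (p : ℤ) ∣ m := by
        rw [← hk]
        show (p : ℤ) ∣ g k % (n : ℤ)
        rw [Int.emod_def]
        exact dvd_sub (hg k) (Dvd.dvd.mul_right (Int.natCast_dvd_natCast.mpr hpn) _)
      obtain ⟨c, hc⟩ := hpm
      have hp0 : (0:ℤ) < p := by exact_mod_cast hp.pos
      have hnpz : (p:ℤ) * ((n/p : ℕ):ℤ) = n := by exact_mod_cast hnp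
      have hc0 : 0 ≤ c := by nlinarith
      have hclt : c < ((n/p : ℕ):ℤ) := lt_of_mul_lt_mul_left (by linarith) hp0.le
      simp only [Finset.mem_image, Finset.mem_range]
      refine ⟨c.toNat, by omega, by push_cast [Int.toNat_of_nonneg hc0]; omega⟩
    calc σ.card ≤ _ := Finset.card_le_card hsub
      _ ≤ (Finset.range (n/p)).card := Finset.card_image_le
      _ = n / p := Finset.card_range _
  exact h1.trans h2

theorem rank_q_pow_floor_le (a : ℤ) (n : ℕ) (hn : 0 < n) (hodd : Odd n)
    (hgcd : 1 < Int.gcd (a * (a + 1)) n)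
    (q : ℝ) (hq0 : 0 < q) (hq1 : q ≠ 1) :
    ((Matrix.of fun j k : Fin n =>
      q ^ ⌊((a * ((j : ℕ) + 1) - (a + 1) * ((k : ℕ) + 1) : ℤ) : ℚ) / (n : ℚ)⌋).rank : ℝ)
      ≤ (n : ℝ) / 3 := by
  set A : Matrix (Fin n) (Fin n) ℝ := Matrix.of fun j k : Fin n =>
      q ^ ⌊((a * ((j : ℕ) + 1) - (a + 1) * ((k : ℕ) + 1) : ℤ) : ℚ) / (n : ℚ)⌋ with hA
  set G : ℕ := Int.gcd (a * (a + 1)) n with hG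
  set p : ℕ := G.minFac with hpdef
  have hp : p.Prime := Nat.minFac_prime (by omega)
  have hpG : p ∣ G := Nat.minFac_dvd G
  have hGn : G ∣ n := by
    have : (G : ℤ) ∣ (n : ℤ) := Int.gcd_dvd_right _ _
    exact_mod_cast this
  have hpn : p ∣ n := hpG.trans hGn
  have hpa : (p : ℤ) ∣ a * (a + 1) := by
    have h1 : (G : ℤ) ∣ a * (a + 1) := Int.gcd_dvd_left _ _
    exact dvd_trans (Int.natCast_dvd_natCast.mpr hpG) h1
  have hp2 : p ≠ 2 := by
    intro h2
    have : 2 ∣ n := h2 ▸ hpn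
    rw [Nat.odd_iff] at hodd
    omega
  have hp3 : 3 ≤ p := by have := hp.two_le; omega
  have hcases : (p : ℤ) ∣ a ∨ (p : ℤ) ∣ a + 1 :=
    ((Nat.prime_iff_prime_int.mp hp).dvd_mul.mp hpa)
  have hrank : A.rank ≤ n / p := by
    rcases hcases with hpa' | hpa'
    · -- p ∣ a : use transpose
      have hMT : ∀ j k : Fin n, (Matrix.transpose A) j k =
          q ^ ⌊(((fun j : Fin n => -((a + 1) * ((j : ℕ) + 1))) j
              + (fun k : Fin n => a * ((k : ℕ) + 1)) k : ℤ) : ℚ) / (n : ℚ)⌋ := by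
        intro j k
        have e : (a * ((k : ℕ) + 1) - (a + 1) * ((j : ℕ) + 1) : ℤ)
            = -((a + 1) * ((j : ℕ) + 1)) + a * ((k : ℕ) + 1) := by ring
        simp only [Matrix.transpose_apply, hA, Matrix.of_apply, e]
      have ht := aux_rank hn hp hpn q hq0
        (fun j : Fin n => -((a + 1) * ((j : ℕ) + 1))) (fun k : Fin n => a * ((k : ℕ) + 1))
        (fun k => Dvd.dvd.mul_right hpa' _) (Matrix.transpose A) hMT
      rwa [Matrix.rank_transpose] at ht
    · have hM : ∀ j k : Fin n, A j k =
          q ^ ⌊(((fun j : Fin n => a * ((j : ℕ) + 1)) j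
              + (fun k : Fin n => -((a + 1) * ((k : ℕ) + 1))) k : ℤ) : ℚ) / (n : ℚ)⌋ := by
        intro j k
        have e : (a * ((j : ℕ) + 1) - (a + 1) * ((k : ℕ) + 1) : ℤ)
            = a * ((j : ℕ) + 1) + -((a + 1) * ((k : ℕ) + 1)) := by ring
        simp only [hA, Matrix.of_apply, e]
      exact aux_rank hn hp hpn q hq0
        (fun j : Fin n => a * ((j : ℕ) + 1)) (fun k : Fin n => -((a + 1) * ((k : ℕ) + 1)))
        (fun k => dvd_neg.mpr (Dvd.dvd.mul_right hpa' _)) A hM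
  calc (A.rank : ℝ) ≤ ((n / p : ℕ) : ℝ) := by exact_mod_cast hrank
    _ ≤ (n : ℝ) / (p : ℝ) := Nat.cast_div_le
    _ ≤ (n : ℝ) / 3 := by
        apply div_le_div_of_nonneg_left (by positivity) (by norm_num)
        exact_mod_cast hp3
end

section
/- Let $a$ be an integer, let $n$ be a positive odd integer with $\gcd(a(a+1), n) > 1$, and let $q$ be a positive real number with $q \neq 1$. Let $A'$ be the $n \times n$ real matrix whose $(j,k)$-entry (for $1 \le j,k \le n$) is $q^{\lceil ((a+1)j-ak)/n \rceil}$ (an integer power of $q$). Then the rank of $A'$ is at most $n/3$. -/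
open Module Submodule Matrix

lemma rank_le_of_cols_scaled {n m : ℕ} (hm : 0 < m) (hmn : m ≤ n)
    (M : Matrix (Fin n) (Fin n) ℝ)
    (h : ∀ k : Fin n, ∃ c : ℝ, ∀ j,
      M j k = c * M j (Fin.castLE hmn ⟨(k : ℕ) % m, Nat.mod_lt _ hm⟩)) :
    M.rank ≤ m := by
  rw [Matrix.rank_eq_finrank_span_cols]
  have hsub : Submodule.span ℝ (Set.range Mᵀ) ≤
      Submodule.span ℝ (Set.range fun i : Fin m => Mᵀ (Fin.castLE hmn i)) := by
    rw [Submodule.span_le]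
    rintro _ ⟨k, rfl⟩
    obtain ⟨c, hc⟩ := h k
    have : Mᵀ k = c • Mᵀ (Fin.castLE hmn ⟨(k : ℕ) % m, Nat.mod_lt _ hm⟩) :=
      funext fun j => hc j
    rw [this]
    exact Submodule.smul_mem _ _ (Submodule.subset_span ⟨_, rfl⟩)
  calc finrank ℝ (span ℝ (Set.range Mᵀ))
      ≤ finrank ℝ (span ℝ (Set.range fun i : Fin m => Mᵀ (Fin.castLE hmn i))) :=
        Submodule.finrank_mono hsub
    _ ≤ m := by simpa [Set.finrank] using
        finrank_range_le_card (R := ℝ) (fun i : Fin m => Mᵀ (Fin.castLE hmn i))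

theorem rank_q_pow_ceil_le (a : ℤ) (n : ℕ) (hn : 0 < n) (hodd : Odd n)
    (hgcd : 1 < Int.gcd (a * (a + 1)) n)
    (q : ℝ) (hq0 : 0 < q) (hq1 : q ≠ 1) :
    ((Matrix.of fun j k : Fin n =>
      q ^ ⌈(((a + 1) * ((j : ℕ) + 1) - a * ((k : ℕ) + 1) : ℤ) : ℚ) / (n : ℚ)⌉).rank : ℝ)
      ≤ (n : ℝ) / 3 := by
  set M : Matrix (Fin n) (Fin n) ℝ := Matrix.of fun j k : Fin n =>
      q ^ ⌈(((a + 1) * ((j : ℕ) + 1) - a * ((k : ℕ) + 1) : ℤ) : ℚ) / (n : ℚ)⌉ with hM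
  set g : ℕ := Int.gcd (a * (a + 1)) n with hg
  set p : ℕ := g.minFac with hp
  have hgne : g ≠ 1 := by omega
  have hpp : p.Prime := Nat.minFac_prime hgne
  have hpg : p ∣ g := Nat.minFac_dvd g
  have hgn : (g : ℤ) ∣ (n : ℤ) := Int.gcd_dvd_right _ _
  have hpn : p ∣ n :=
    Int.natCast_dvd_natCast.mp ((Int.natCast_dvd_natCast.2 hpg).trans hgn)
  have hpZ : (p : ℤ) ∣ a * (a + 1) :=
    (Int.natCast_dvd_natCast.2 hpg).trans (Int.gcd_dvd_left _ _)
  have hp3 : 3 ≤ p := by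
    have h2 : p ≠ 2 := by
      intro h
      have hd : 2 ∣ n := h ▸ hpn
      have := Nat.odd_iff.mp hodd
      omega
    have := hpp.two_le
    omega
  set m : ℕ := n / p with hmdef
  have hnm : n = m * p := (Nat.div_mul_cancel hpn).symm
  have hm : 0 < m := by
    rcases Nat.eq_zero_or_pos m with h | h
    · rw [h] at hnm; omega
    · exact h
  have hmn : m ≤ n := Nat.div_le_self _ _
  have hq0' : q ≠ 0 := ne_of_gt hq0
  have hnn : ((n : ℚ)) ≠ 0 := by positivity
  have hnz : (n : ℤ) = m * p := by exact_mod_cast hnm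
  have hprime : Prime (p : ℤ) := Int.prime_iff_natAbs_prime.mpr (by simpa using hpp)
  have hrank : M.rank ≤ m := by
    rcases hprime.dvd_mul.mp hpZ with hpa | hpa
    · -- p ∣ a : columns repeat up to scalar
      obtain ⟨a', ha'⟩ := hpa
      refine rank_le_of_cols_scaled hm hmn M (fun k => ?_)
      set tn : ℕ := (k : ℕ) / m with htn
      set k0 : ℕ := (k : ℕ) % m with hk0
      refine ⟨q ^ (-((a' * tn : ℤ))), fun j => ?_⟩
      have hdm : ((k : ℕ) : ℤ) = m * tn + k0 := by
        exact_mod_cast (Nat.div_add_mod (k : ℕ) m).symm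
      have hnum : ((a + 1) * ((j : ℕ) + 1) - a * ((k : ℕ) + 1) : ℤ)
          = ((a + 1) * ((j : ℕ) + 1) - a * ((k0 : ℕ) + 1)) - (a' * tn) * n := by
        rw [hdm, hnz, ha']; ring
      have key : (((a + 1) * ((j : ℕ) + 1) - a * ((k : ℕ) + 1) : ℤ) : ℚ) / (n : ℚ)
          = (((a + 1) * ((j : ℕ) + 1) - a * ((k0 : ℕ) + 1) : ℤ) : ℚ) / (n : ℚ)
            - ((a' * tn : ℤ) : ℚ) := by
        rw [hnum]; push_cast; field_simp
      simp only [hM, Matrix.of_apply, Fin.coe_castLE]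
      rw [key, Int.ceil_sub_intCast, sub_eq_add_neg, zpow_add₀ hq0', mul_comm]
    · -- p ∣ a + 1 : rows repeat up to scalar, use transpose
      obtain ⟨b', hb'⟩ := hpa
      rw [← Matrix.rank_transpose]
      refine rank_le_of_cols_scaled hm hmn Mᵀ (fun k => ?_)
      set tn : ℕ := (k : ℕ) / m with htn
      set k0 : ℕ := (k : ℕ) % m with hk0
      refine ⟨q ^ ((b' * tn : ℤ)), fun j => ?_⟩
      have hdm : ((k : ℕ) : ℤ) = m * tn + k0 := by
        exact_mod_cast (Nat.div_add_mod (k : ℕ) m).symm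
      have hnum : ((a + 1) * ((k : ℕ) + 1) - a * ((j : ℕ) + 1) : ℤ)
          = ((a + 1) * ((k0 : ℕ) + 1) - a * ((j : ℕ) + 1)) + (b' * tn) * n := by
        rw [hdm, hnz, hb']; ring
      have key : (((a + 1) * ((k : ℕ) + 1) - a * ((j : ℕ) + 1) : ℤ) : ℚ) / (n : ℚ)
          = (((a + 1) * ((k0 : ℕ) + 1) - a * ((j : ℕ) + 1) : ℤ) : ℚ) / (n : ℚ)
            + ((b' * tn : ℤ) : ℚ) := by
        rw [hnum]; push_cast; field_simp
      simp only [hM, Matrix.transpose_apply, Matrix.of_apply, Fin.coe_castLE]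
      rw [key, Int.ceil_add_intCast, zpow_add₀ hq0', mul_comm]
  have h3m : (m : ℝ) * 3 ≤ (n : ℝ) := by
    have : m * 3 ≤ m * p := Nat.mul_le_mul_left m hp3
    rw [hnm]; exact_mod_cast this
  calc (M.rank : ℝ) ≤ (m : ℝ) := by exact_mod_cast hrank
    _ ≤ (n : ℝ) / 3 := by rw [le_div_iff₀ (by norm_num : (0:ℝ) < 3)]; exact h3m
end

section
/- Let $a$ be an integer, let $n$ be a positive odd integer with $\gcd(a(a+1), n) = 1$, and let $q$ be a positive real number with $q \neq 1$. Let $A$ be the $n \times n$ real matrix whose $(j,k)$-entry (for $1 \le j,k \le n$) is $q^{\lfloor (aj-(a+1)k)/n \rfloor}$ (an integer power of $q$). Then $A$ is invertible and the sum of all $n^2$ entries of $A^{-1}$ equals $q$. -/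
private lemma dvd_small (n : ℕ) (c d : ℤ) (hc : IsCoprime (n:ℤ) c)
    (hd : (n:ℤ) ∣ c * d) (h1 : -(n:ℤ) < d) (h2 : d < n) : d = 0 := by
  have hnd : (n:ℤ) ∣ d := hc.dvd_of_dvd_mul_left hd
  rcases lt_trichotomy d 0 with h | h | h
  · have : (n:ℤ) ∣ -d := (dvd_neg).mpr hnd
    have := Int.le_of_dvd (by omega) this
    omega
  · exact h
  · have := Int.le_of_dvd h hnd
    omega

private lemma exists_unique_k (n : ℕ) (hn : 0 < n) (c : ℤ) (hc : IsCoprime (n:ℤ) c) (m : ℤ) :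
    ∃! k : Fin n, (n:ℤ) ∣ c * ((k:ℕ)+1) - m := by
  obtain ⟨x, y, hxy⟩ := id hc
  have hn0 : (n:ℤ) ≠ 0 := by exact_mod_cast hn.ne'
  set e : ℤ := (y * m - 1) % n with he
  have he0 : 0 ≤ e := Int.emod_nonneg _ hn0
  have he1 : e < n := Int.emod_lt_of_pos _ (by exact_mod_cast hn)
  have hlt : e.toNat < n := by omega
  have hdvd1 : (n:ℤ) ∣ c * ((((⟨e.toNat, hlt⟩ : Fin n):ℕ):ℤ)+1) - m := by
    show (n:ℤ) ∣ c * ((e.toNat:ℤ)+1) - m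
    rw [Int.toNat_of_nonneg he0]
    obtain ⟨d, hd⟩ := Int.dvd_self_sub_of_emod_eq (he.symm : (y*m-1) % n = e)
    exact ⟨-(x*m) - c*d, by linear_combination m * hxy - c * hd⟩
  refine ⟨⟨e.toNat, hlt⟩, hdvd1, ?_⟩
  rintro k hk
  have hdiff : (n:ℤ) ∣ c * (((k:ℕ):ℤ) - (e.toNat:ℤ)) := by
    have hsub := dvd_sub hk hdvd1
    have heq : (c * (((k:ℕ):ℤ)+1) - m) - (c * ((((⟨e.toNat, hlt⟩ : Fin n):ℕ):ℤ)+1) - m)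
        = c * (((k:ℕ):ℤ) - (e.toNat:ℤ)) := by
      show (c * (((k:ℕ):ℤ)+1) - m) - (c * ((e.toNat:ℤ)+1) - m) = c * (((k:ℕ):ℤ) - (e.toNat:ℤ))
      ring
    rwa [heq] at hsub
  have hk' := k.isLt
  have h0 := dvd_small n c _ hc hdiff (by omega) (by omega)
  apply Fin.ext
  show (k:ℕ) = e.toNat
  omega

private lemma floor_shift (n : ℕ) (hn : 0 < n) (m t : ℤ) :
    ⌊((m - n*t : ℤ):ℚ)/(n:ℚ)⌋ = ⌊((m:ℤ):ℚ)/(n:ℚ)⌋ - t := by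
  have hn' : ((n:ℚ)) ≠ 0 := by positivity
  push_cast
  rw [sub_div, mul_comm, mul_div_assoc, div_self hn', mul_one, Int.floor_sub_intCast]

private lemma floor_pred (n : ℕ) (hn : 0 < n) (m : ℤ) (h : ¬ (n:ℤ) ∣ m) :
    ⌊((m - 1 : ℤ):ℚ)/(n:ℚ)⌋ = ⌊((m:ℤ):ℚ)/(n:ℚ)⌋ := by
  have hn' : (0:ℚ) < (n:ℚ) := by positivity
  set f := ⌊((m:ℤ):ℚ)/(n:ℚ)⌋ with hf
  have h1 : ((f:ℚ)) ≤ (m:ℚ)/(n:ℚ) := Int.floor_le _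
  have h2 : (m:ℚ)/(n:ℚ) < f + 1 := Int.lt_floor_add_one _
  have h1' : f * (n:ℤ) ≤ m := by exact_mod_cast (le_div_iff₀ hn').mp h1
  have h2q : (m:ℚ) < (f:ℚ) * n + n := by
    have := (div_lt_iff₀ hn').mp h2
    linarith
  have h2' : m < f * (n:ℤ) + n := by exact_mod_cast h2q
  have hne : m ≠ f * (n:ℤ) := by
    intro hc
    exact h ⟨f, by rw [hc, mul_comm]⟩
  rw [Int.floor_eq_iff]
  refine ⟨?_, ?_⟩
  · rw [le_div_iff₀ hn']
    have hx : f * (n:ℤ) ≤ m - 1 := by omega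
    exact_mod_cast hx
  · rw [div_lt_iff₀ hn']
    have hx : m - 1 < f * (n:ℤ) + n := by omega
    have : ((m - 1 : ℤ):ℚ) < (f:ℚ) * n + n := by exact_mod_cast hx
    push_cast
    linarith

private lemma sum_aux (n : ℕ) (hn : 0 < n) (c : ℤ) (hc : IsCoprime (n:ℤ) c)
    (q : ℝ) (hq : q ≠ 0) (M m : ℤ) :
    ∑ k : Fin n, (if (n:ℤ) ∣ (c*((k:ℕ)+1) - m) then
        q ^ ⌊((M - c*((k:ℕ)+1) : ℤ):ℚ)/(n:ℚ)⌋ * q ^ ((c*((k:ℕ)+1) - m)/(n:ℤ)) else 0)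
      = q ^ ⌊((M - m : ℤ):ℚ)/(n:ℚ)⌋ := by
  obtain ⟨k1, hk1, huniq⟩ := exists_unique_k n hn c hc m
  rw [Finset.sum_eq_single k1]
  · rw [if_pos hk1]
    set t := (c*((k1:ℕ)+1) - m)/(n:ℤ) with ht
    have hv : (n:ℤ)*t = c*((k1:ℕ)+1) - m := Int.mul_ediv_cancel' hk1
    have hM : M - c*((k1:ℕ)+1) = (M - m) - (n:ℤ)*t := by omega
    rw [hM, floor_shift n hn, ← zpow_add₀ hq, sub_add_cancel]
  · intro k _ hk
    rw [if_neg]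
    intro hdvd
    exact hk (huniq k hdvd)
  · intro h
    exact absurd (Finset.mem_univ k1) h

private lemma key_sum (a : ℤ) (m : ℕ)
    (hca : IsCoprime (((m+1 : ℕ)):ℤ) a) (hca1 : IsCoprime (((m+1 : ℕ)):ℤ) (a+1))
    (q : ℝ) (hq : q ≠ 0) :
    (∑ K ∈ Finset.range (m+1), ∑ J ∈ Finset.range (m+1),
        (if (((m+1:ℕ)):ℤ) ∣ ((a+1)*((K:ℤ)+1) - a*((J:ℤ)+1)) then
          q ^ (((a+1)*((K:ℤ)+1) - a*((J:ℤ)+1))/(((m+1:ℕ)):ℤ)) else 0))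
      - (∑ K ∈ Finset.range (m+1), ∑ J ∈ Finset.range (m+1),
        (if (((m+1:ℕ)):ℤ) ∣ ((a+1)*((K:ℤ)+1) - a*((J:ℤ)+1) - 1) then
          q ^ (((a+1)*((K:ℤ)+1) - a*((J:ℤ)+1) - 1)/(((m+1:ℕ)):ℤ)) else 0))
      = q - 1 := by
  have hnz : (((m+1:ℕ)):ℤ) ≠ 0 := by positivity
  -- first sum: peel last index in both coordinates
  have hS1 : (∑ K ∈ Finset.range (m+1), ∑ J ∈ Finset.range (m+1),
        (if (((m+1:ℕ)):ℤ) ∣ ((a+1)*((K:ℤ)+1) - a*((J:ℤ)+1)) then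
          q ^ (((a+1)*((K:ℤ)+1) - a*((J:ℤ)+1))/(((m+1:ℕ)):ℤ)) else 0))
      = (∑ K ∈ Finset.range m, ∑ J ∈ Finset.range m,
        (if (((m+1:ℕ)):ℤ) ∣ ((a+1)*((K:ℤ)+1) - a*((J:ℤ)+1)) then
          q ^ (((a+1)*((K:ℤ)+1) - a*((J:ℤ)+1))/(((m+1:ℕ)):ℤ)) else 0)) + q := by
    simp only [Finset.sum_range_succ]
    rw [Finset.sum_add_distrib]
    have hzero1 : ∀ K ∈ Finset.range m,
        (if (((m+1:ℕ)):ℤ) ∣ ((a+1)*((K:ℤ)+1) - a*((m:ℤ)+1)) then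
          q ^ (((a+1)*((K:ℤ)+1) - a*((m:ℤ)+1))/(((m+1:ℕ)):ℤ)) else 0) = 0 := by
      intro K hK
      rw [if_neg]
      intro hdvd
      have h2 : (((m+1:ℕ)):ℤ) ∣ (a+1)*((K:ℤ)+1) := by
        have : (a+1)*((K:ℤ)+1) = ((a+1)*((K:ℤ)+1) - a*((m:ℤ)+1)) + a*((m+1:ℕ):ℤ) := by
          push_cast; ring
        rw [this]
        exact dvd_add hdvd (Dvd.dvd.mul_left dvd_rfl a)
      have hKlt := Finset.mem_range.mp hK
      have := dvd_small (m+1) (a+1) ((K:ℤ)+1) hca1 h2 (by push_cast; omega) (by push_cast; omega)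
      omega
    have hzero2 : ∀ J ∈ Finset.range m,
        (if (((m+1:ℕ)):ℤ) ∣ ((a+1)*((m:ℤ)+1) - a*((J:ℤ)+1)) then
          q ^ (((a+1)*((m:ℤ)+1) - a*((J:ℤ)+1))/(((m+1:ℕ)):ℤ)) else 0) = 0 := by
      intro J hJ
      rw [if_neg]
      intro hdvd
      have h2 : (((m+1:ℕ)):ℤ) ∣ a*((J:ℤ)+1) := by
        have : a*((J:ℤ)+1) = (a+1)*((m+1:ℕ):ℤ) - ((a+1)*((m:ℤ)+1) - a*((J:ℤ)+1)) := by
          push_cast; ring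
        rw [this]
        exact dvd_sub (Dvd.dvd.mul_left dvd_rfl (a+1)) hdvd
      have hJlt := Finset.mem_range.mp hJ
      have := dvd_small (m+1) a ((J:ℤ)+1) hca h2 (by push_cast; omega) (by push_cast; omega)
      omega
    rw [Finset.sum_eq_zero hzero1, Finset.sum_eq_zero hzero2]
    have hdiag : (a+1)*((m:ℤ)+1) - a*((m:ℤ)+1) = ((m+1:ℕ):ℤ) := by push_cast; ring
    rw [hdiag, if_pos dvd_rfl, Int.ediv_self hnz, zpow_one]
    ring
  -- second sum: peel first index in both coordinates
  have hS2 : (∑ K ∈ Finset.range (m+1), ∑ J ∈ Finset.range (m+1),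
        (if (((m+1:ℕ)):ℤ) ∣ ((a+1)*((K:ℤ)+1) - a*((J:ℤ)+1) - 1) then
          q ^ (((a+1)*((K:ℤ)+1) - a*((J:ℤ)+1) - 1)/(((m+1:ℕ)):ℤ)) else 0))
      = (∑ K ∈ Finset.range m, ∑ J ∈ Finset.range m,
        (if (((m+1:ℕ)):ℤ) ∣ ((a+1)*((K:ℤ)+1) - a*((J:ℤ)+1)) then
          q ^ (((a+1)*((K:ℤ)+1) - a*((J:ℤ)+1))/(((m+1:ℕ)):ℤ)) else 0)) + 1 := by
    simp only [Finset.sum_range_succ']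
    rw [Finset.sum_add_distrib]
    have hmain : ∀ K ∈ Finset.range m, ∀ J ∈ Finset.range m,
        (if (((m+1:ℕ)):ℤ) ∣ ((a+1)*(((K+1:ℕ):ℤ)+1) - a*(((J+1:ℕ):ℤ)+1) - 1) then
          q ^ (((a+1)*(((K+1:ℕ):ℤ)+1) - a*(((J+1:ℕ):ℤ)+1) - 1)/(((m+1:ℕ)):ℤ)) else 0)
        = (if (((m+1:ℕ)):ℤ) ∣ ((a+1)*((K:ℤ)+1) - a*((J:ℤ)+1)) then
          q ^ (((a+1)*((K:ℤ)+1) - a*((J:ℤ)+1))/(((m+1:ℕ)):ℤ)) else 0) := by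
      intro K _ J _
      have hv : (a+1)*(((K+1:ℕ):ℤ)+1) - a*(((J+1:ℕ):ℤ)+1) - 1
          = (a+1)*((K:ℤ)+1) - a*((J:ℤ)+1) := by push_cast; ring
      rw [hv]
    have hzero1 : ∀ K ∈ Finset.range m,
        (if (((m+1:ℕ)):ℤ) ∣ ((a+1)*(((K+1:ℕ):ℤ)+1) - a*(((0:ℕ):ℤ)+1) - 1) then
          q ^ (((a+1)*(((K+1:ℕ):ℤ)+1) - a*(((0:ℕ):ℤ)+1) - 1)/(((m+1:ℕ)):ℤ)) else 0) = 0 := by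
      intro K hK
      rw [if_neg]
      intro hdvd
      have hv : (a+1)*(((K+1:ℕ):ℤ)+1) - a*(((0:ℕ):ℤ)+1) - 1 = (a+1)*((K:ℤ)+1) := by
        push_cast; ring
      rw [hv] at hdvd
      have hKlt := Finset.mem_range.mp hK
      have := dvd_small (m+1) (a+1) ((K:ℤ)+1) hca1 hdvd (by push_cast; omega) (by push_cast; omega)
      omega
    have hzero2 : ∀ J ∈ Finset.range m,
        (if (((m+1:ℕ)):ℤ) ∣ ((a+1)*(((0:ℕ):ℤ)+1) - a*(((J+1:ℕ):ℤ)+1) - 1) then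
          q ^ (((a+1)*(((0:ℕ):ℤ)+1) - a*(((J+1:ℕ):ℤ)+1) - 1)/(((m+1:ℕ)):ℤ)) else 0) = 0 := by
      intro J hJ
      rw [if_neg]
      intro hdvd
      have hv : (a+1)*(((0:ℕ):ℤ)+1) - a*(((J+1:ℕ):ℤ)+1) - 1 = a * (-((J:ℤ)+1)) := by
        push_cast; ring
      rw [hv] at hdvd
      have hJlt := Finset.mem_range.mp hJ
      have := dvd_small (m+1) a (-((J:ℤ)+1)) hca hdvd (by push_cast; omega) (by push_cast; omega)
      omega
    rw [Finset.sum_eq_zero hzero1, Finset.sum_eq_zero hzero2,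
      Finset.sum_congr rfl (fun K hK => Finset.sum_congr rfl (fun J hJ => hmain K hK J hJ))]
    have hdiag : (a+1)*(((0:ℕ):ℤ)+1) - a*(((0:ℕ):ℤ)+1) - 1 = 0 := by push_cast; ring
    rw [hdiag, if_pos (dvd_zero _)]
    norm_num
  rw [hS1, hS2]
  ring

theorem sum_entries_inv_q_pow_floor (a : ℤ) (n : ℕ) (hn : 0 < n) (hodd : Odd n)
    (hcop : Int.gcd (a * (a + 1)) n = 1)
    (q : ℝ) (hq0 : 0 < q) (hq1 : q ≠ 1) :
    IsUnit (Matrix.of fun j k : Fin n =>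
        q ^ ⌊((a * ((j : ℕ) + 1) - (a + 1) * ((k : ℕ) + 1) : ℤ) : ℚ) / (n : ℚ)⌋) ∧
    ∑ j : Fin n, ∑ k : Fin n,
      (Matrix.of fun j k : Fin n =>
        q ^ ⌊((a * ((j : ℕ) + 1) - (a + 1) * ((k : ℕ) + 1) : ℤ) : ℚ) / (n : ℚ)⌋)⁻¹ j k = q := by
  have hq0' : q ≠ 0 := ne_of_gt hq0
  have hq1' : q - 1 ≠ 0 := sub_ne_zero.mpr hq1
  have hco : IsCoprime (a*(a+1)) (n:ℤ) := Int.isCoprime_iff_gcd_eq_one.mpr hcop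
  have hca : IsCoprime ((n:ℤ)) a := hco.of_mul_left_left.symm
  have hca1 : IsCoprime ((n:ℤ)) (a+1) := hco.of_mul_left_right.symm
  set A : Matrix (Fin n) (Fin n) ℝ := Matrix.of (fun j k : Fin n =>
      q ^ ⌊((a * ((j : ℕ) + 1) - (a + 1) * ((k : ℕ) + 1) : ℤ) : ℚ) / (n : ℚ)⌋) with hA
  set B : Matrix (Fin n) (Fin n) ℝ := Matrix.of (fun k j : Fin n =>
      (q/(q-1)) * ((if (n:ℤ) ∣ ((a+1)*((k:ℕ)+1) - a*((j:ℕ)+1)) then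
          q ^ (((a+1)*((k:ℕ)+1) - a*((j:ℕ)+1))/(n:ℤ)) else 0)
        - (if (n:ℤ) ∣ ((a+1)*((k:ℕ)+1) - a*((j:ℕ)+1) - 1) then
          q ^ (((a+1)*((k:ℕ)+1) - a*((j:ℕ)+1) - 1)/(n:ℤ)) else 0))) with hB
  have hAB : A * B = 1 := by
    ext j j'
    rw [Matrix.mul_apply]
    have hterm : ∀ k : Fin n, A j k * B k j' = (q/(q-1)) *
        ((if (n:ℤ) ∣ ((a+1)*((k:ℕ)+1) - a*((j':ℕ)+1)) then
            A j k * q ^ (((a+1)*((k:ℕ)+1) - a*((j':ℕ)+1))/(n:ℤ)) else 0)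
          - (if (n:ℤ) ∣ ((a+1)*((k:ℕ)+1) - a*((j':ℕ)+1) - 1) then
            A j k * q ^ (((a+1)*((k:ℕ)+1) - a*((j':ℕ)+1) - 1)/(n:ℤ)) else 0)) := by
      intro k
      simp only [hB, Matrix.of_apply]
      by_cases h1 : (n:ℤ) ∣ ((a+1)*((k:ℕ)+1) - a*((j':ℕ)+1)) <;>
        by_cases h2 : (n:ℤ) ∣ ((a+1)*((k:ℕ)+1) - a*((j':ℕ)+1) - 1) <;>
        simp [h1, h2] <;> ring
    rw [Finset.sum_congr rfl (fun k _ => hterm k), ← Finset.mul_sum,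
      Finset.sum_sub_distrib]
    have hAform : ∀ k : Fin n, A j k
        = q ^ ⌊((a * ((j:ℕ) + 1) - (a+1)*((k:ℕ)+1) : ℤ):ℚ)/(n:ℚ)⌋ := fun k => rfl
    have hsum1 : ∑ k : Fin n, (if (n:ℤ) ∣ ((a+1)*((k:ℕ)+1) - a*((j':ℕ)+1)) then
          A j k * q ^ (((a+1)*((k:ℕ)+1) - a*((j':ℕ)+1))/(n:ℤ)) else 0)
        = q ^ ⌊((a * ((j:ℕ)+1) - a*((j':ℕ)+1) : ℤ):ℚ)/(n:ℚ)⌋ := by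
      have := sum_aux n hn (a+1) hca1 q hq0' (a * ((j:ℕ)+1)) (a*((j':ℕ)+1))
      rw [← this]
      exact Finset.sum_congr rfl (fun k _ => by rw [hAform k])
    have hsum2 : ∑ k : Fin n, (if (n:ℤ) ∣ ((a+1)*((k:ℕ)+1) - a*((j':ℕ)+1) - 1) then
          A j k * q ^ (((a+1)*((k:ℕ)+1) - a*((j':ℕ)+1) - 1)/(n:ℤ)) else 0)
        = q ^ ⌊((a * ((j:ℕ)+1) - (a*((j':ℕ)+1) + 1) : ℤ):ℚ)/(n:ℚ)⌋ := by
      have := sum_aux n hn (a+1) hca1 q hq0' (a * ((j:ℕ)+1)) (a*((j':ℕ)+1) + 1)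
      rw [← this]
      refine Finset.sum_congr rfl (fun k _ => ?_)
      have hv : (a+1)*((k:ℕ)+1) - a*((j':ℕ)+1) - 1 = (a+1)*((k:ℕ)+1) - (a*((j':ℕ)+1)+1) := by
        ring
      rw [hAform k, hv]
    rw [hsum1, hsum2]
    by_cases hjj : j = j'
    · subst hjj
      have h0 : a * ((j:ℕ)+1) - a*((j:ℕ)+1) = (0:ℤ) := by ring
      have h1 : a * ((j:ℕ)+1) - (a*((j:ℕ)+1) + 1) = (-1:ℤ) := by ring
      rw [h0, h1]
      have hfm1 : ⌊((-1 : ℤ):ℚ)/(n:ℚ)⌋ = -1 := by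
        have hn' : (0:ℚ) < (n:ℚ) := by positivity
        have hn1 : (1:ℚ) ≤ (n:ℚ) := by exact_mod_cast hn
        rw [Int.floor_eq_iff]
        constructor
        · push_cast
          rw [le_div_iff₀ hn']
          linarith
        · push_cast
          rw [div_lt_iff₀ hn']
          linarith
      have hf0 : ⌊((0:ℤ):ℚ)/(n:ℚ)⌋ = 0 := by norm_num
      rw [hfm1, hf0, Matrix.one_apply_eq, zpow_zero, zpow_neg_one]
      field_simp
    · rw [Matrix.one_apply_ne hjj]
      have hd : a * ((j:ℕ)+1) - a*((j':ℕ)+1) = a * (((j:ℕ):ℤ) - ((j':ℕ):ℤ)) := by ring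
      have hndvd : ¬ (n:ℤ) ∣ (a * ((j:ℕ)+1) - a*((j':ℕ)+1)) := by
        rw [hd]
        intro hdvd
        have hj := j.isLt
        have hj' := j'.isLt
        have := dvd_small n a _ hca hdvd (by omega) (by omega)
        exact hjj (Fin.ext (by omega))
      have heq : a * ((j:ℕ)+1) - (a*((j':ℕ)+1) + 1) = (a * ((j:ℕ)+1) - a*((j':ℕ)+1)) - 1 := by
        ring
      rw [heq, floor_pred n hn _ hndvd]
      ring
  have hdet : IsUnit A.det := by
    have := congrArg Matrix.det hAB
    rw [Matrix.det_mul, Matrix.det_one] at this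
    exact IsUnit.of_mul_eq_one _ this
  refine ⟨(Matrix.isUnit_iff_isUnit_det A).mpr hdet, ?_⟩
  rw [Matrix.inv_eq_right_inv hAB]
  -- compute the sum of entries of B
  obtain ⟨m, rfl⟩ : ∃ m, n = m + 1 := ⟨n - 1, by omega⟩
  have hBsum : ∀ K J : Fin (m+1), B K J = (q/(q-1)) *
      ((if (((m+1:ℕ)):ℤ) ∣ ((a+1)*((K:ℕ)+1) - a*((J:ℕ)+1)) then
          q ^ (((a+1)*((K:ℕ)+1) - a*((J:ℕ)+1))/(((m+1:ℕ)):ℤ)) else 0)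
        - (if (((m+1:ℕ)):ℤ) ∣ ((a+1)*((K:ℕ)+1) - a*((J:ℕ)+1) - 1) then
          q ^ (((a+1)*((K:ℕ)+1) - a*((J:ℕ)+1) - 1)/(((m+1:ℕ)):ℤ)) else 0)) := fun K J => rfl
  calc ∑ K : Fin (m+1), ∑ J : Fin (m+1), B K J
      = (q/(q-1)) * ((∑ K : Fin (m+1), ∑ J : Fin (m+1),
        (if (((m+1:ℕ)):ℤ) ∣ ((a+1)*((K:ℕ)+1) - a*((J:ℕ)+1)) then
          q ^ (((a+1)*((K:ℕ)+1) - a*((J:ℕ)+1))/(((m+1:ℕ)):ℤ)) else 0))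
        - (∑ K : Fin (m+1), ∑ J : Fin (m+1),
        (if (((m+1:ℕ)):ℤ) ∣ ((a+1)*((K:ℕ)+1) - a*((J:ℕ)+1) - 1) then
          q ^ (((a+1)*((K:ℕ)+1) - a*((J:ℕ)+1) - 1)/(((m+1:ℕ)):ℤ)) else 0))) := by
        simp only [hBsum, Finset.mul_sum, Finset.sum_sub_distrib, mul_sub]
    _ = (q/(q-1)) * (q - 1) := by
        congr 1
        have e1 : (∑ K : Fin (m+1), ∑ J : Fin (m+1),
            (if (((m+1:ℕ)):ℤ) ∣ ((a+1)*((K:ℕ)+1) - a*((J:ℕ)+1)) then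
              q ^ (((a+1)*((K:ℕ)+1) - a*((J:ℕ)+1))/(((m+1:ℕ)):ℤ)) else 0))
            = ∑ K ∈ Finset.range (m+1), ∑ J ∈ Finset.range (m+1),
            (if (((m+1:ℕ)):ℤ) ∣ ((a+1)*((K:ℤ)+1) - a*((J:ℤ)+1)) then
              q ^ (((a+1)*((K:ℤ)+1) - a*((J:ℤ)+1))/(((m+1:ℕ)):ℤ)) else 0) := by
          rw [Fin.sum_univ_eq_sum_range (fun K => ∑ J : Fin (m+1),
            (if (((m+1:ℕ)):ℤ) ∣ ((a+1)*((K:ℤ)+1) - a*(((J:ℕ):ℤ)+1)) then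
              q ^ (((a+1)*((K:ℤ)+1) - a*(((J:ℕ):ℤ)+1))/(((m+1:ℕ)):ℤ)) else 0)) (m+1)]
          exact Finset.sum_congr rfl (fun K _ => Fin.sum_univ_eq_sum_range (fun J =>
            (if (((m+1:ℕ)):ℤ) ∣ ((a+1)*((K:ℤ)+1) - a*((J:ℤ)+1)) then
              q ^ (((a+1)*((K:ℤ)+1) - a*((J:ℤ)+1))/(((m+1:ℕ)):ℤ)) else 0)) (m+1))
        have e2 : (∑ K : Fin (m+1), ∑ J : Fin (m+1),
            (if (((m+1:ℕ)):ℤ) ∣ ((a+1)*((K:ℕ)+1) - a*((J:ℕ)+1) - 1) then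
              q ^ (((a+1)*((K:ℕ)+1) - a*((J:ℕ)+1) - 1)/(((m+1:ℕ)):ℤ)) else 0))
            = ∑ K ∈ Finset.range (m+1), ∑ J ∈ Finset.range (m+1),
            (if (((m+1:ℕ)):ℤ) ∣ ((a+1)*((K:ℤ)+1) - a*((J:ℤ)+1) - 1) then
              q ^ (((a+1)*((K:ℤ)+1) - a*((J:ℤ)+1) - 1)/(((m+1:ℕ)):ℤ)) else 0) := by
          rw [Fin.sum_univ_eq_sum_range (fun K => ∑ J : Fin (m+1),
            (if (((m+1:ℕ)):ℤ) ∣ ((a+1)*((K:ℤ)+1) - a*(((J:ℕ):ℤ)+1) - 1) then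
              q ^ (((a+1)*((K:ℤ)+1) - a*(((J:ℕ):ℤ)+1) - 1)/(((m+1:ℕ)):ℤ)) else 0)) (m+1)]
          exact Finset.sum_congr rfl (fun K _ => Fin.sum_univ_eq_sum_range (fun J =>
            (if (((m+1:ℕ)):ℤ) ∣ ((a+1)*((K:ℤ)+1) - a*((J:ℤ)+1) - 1) then
              q ^ (((a+1)*((K:ℤ)+1) - a*((J:ℤ)+1) - 1)/(((m+1:ℕ)):ℤ)) else 0)) (m+1))
        rw [e1, e2]
        exact key_sum a m hca hca1 q hq0'
    _ = q := by field_simp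
end
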